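/- The tag-options lattice infimum is a greatest lower bound: for any subset Λ of the tag-options lattice over tags T and options O, with V := {A | (A, f) ∈ Λ}, the element (⋃ V, ⨅ {φ_{A, ⋃V}(f) | (A, f) ∈ Λ}) is a lower bound of Λ, and any (T', f') that is below every element of Λ satisfies (T', f') ⊑ (⋃ V, ⨅ {φ_{A, ⋃V}(f) | (A, f) ∈ Λ}). -/

import Mathlib

open Classical in
noncomputable def phi {T O : Type*} (A : Set T) (f : T → Set O) : T → Set O :=
  fun t => if t ∈ A then f t else Set.univ

def tole {T O : Type*} (x y : Set T × (T → Set O)) : Prop :=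
  y.1 ⊆ x.1 ∧ ∀ t ∈ y.1, phi x.1 x.2 t ⊆ y.2 t

section TagOptions

variable {T O : Type*}

theorem phi_of_mem {A : Set T} {f : T → Set O} {t : T} (ht : t ∈ A) : phi A f t = f t :=
  if_pos ht

theorem phi_of_notMem {A : Set T} {f : T → Set O} {t : T} (ht : t ∉ A) :
    phi A f t = Set.univ :=
  if_neg ht

theorem tole.phi_subset {x y : Set T × (T → Set O)} (h : tole x y) (t : T) :
    phi x.1 x.2 t ⊆ phi y.1 y.2 t := by
  by_cases ht : t ∈ y.1
  · rw [phi_of_mem ht]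
    exact h.2 t ht
  · rw [phi_of_notMem ht]
    exact Set.subset_univ _

noncomputable def tagInf (Λ : Set (Set T × (T → Set O))) : Set T × (T → Set O) :=
  (⋃ x ∈ Λ, x.1, fun t => ⋂ x ∈ Λ, phi x.1 x.2 t)

theorem tagInf_tole {Λ : Set (Set T × (T → Set O))} {x : Set T × (T → Set O)}
    (hx : x ∈ Λ) : tole (tagInf Λ) x := by
  refine ⟨Set.subset_biUnion_of_mem (u := Prod.fst) hx, fun t ht => ?_⟩
  calc phi (tagInf Λ).1 (tagInf Λ).2 t = ⋂ x ∈ Λ, phi x.1 x.2 t :=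
        phi_of_mem (Set.mem_biUnion hx ht)
    _ ⊆ phi x.1 x.2 t := Set.biInter_subset_of_mem hx
    _ = x.2 t := phi_of_mem ht

theorem tole_tagInf {Λ : Set (Set T × (T → Set O))} {y : Set T × (T → Set O)}
    (hy : ∀ x ∈ Λ, tole y x) : tole y (tagInf Λ) :=
  ⟨Set.iUnion₂_subset fun x hx => (hy x hx).1,
    fun t _ => Set.subset_iInter₂ fun x hx => (hy x hx).phi_subset t⟩

end TagOptions

theorem tagOptions_inf_is_glb
    {T O : Type*} (Λ : Set (Set T × (T → Set O))) :
    (∀ x ∈ Λ,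
      tole (⋃ x ∈ Λ, x.1, fun t => ⋂ x ∈ Λ, phi x.1 x.2 t) x) ∧
    (∀ y : Set T × (T → Set O), (∀ x ∈ Λ, tole y x) →
      tole y (⋃ x ∈ Λ, x.1, fun t => ⋂ x ∈ Λ, phi x.1 x.2 t)) :=
  ⟨fun _ hx => tagInf_tole hx, fun _ hy => tole_tagInf hy⟩
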